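/- arXiv:2109.15268 — 2 statements merged into one kernel-verified Lean document; each statement's English description precedes it below -/
import Mathlib

section
/- Let G be a uv-straight graph, let b and c be distinct vertices of G with h(b) ≤ h(c), let S be a monotone uc-path of G and T a monotone bv-path of G such that S minus c is anticomplete to T and S is anticomplete to T minus b. Let G_{c,b} be the subgraph of G induced by ({x ∈ V(G) : h(b) ≤ h(x) ≤ h(c)}) \ ((N_G[S−c] ∪ N_G[T−b]) \ {c,b}). If Q is a shortest cb-path of G_{c,b}, then the concatenation of S, Q, and T is a uv-trail of G. -/
open SimpleGraph

variable {V : Type*}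

/-- A walk is monotone if its vertices have pairwise distinct heights. -/
def MonoWalk (G : SimpleGraph V) (u : V) {x y : V} (W : G.Walk x y) : Prop :=
  (W.support.map (fun z => G.dist u z)).Nodup

/-- `P` is a shortest `x`-`y` path of `G`. -/
def IsShortestPath (G : SimpleGraph V) {x y : V} (P : G.Walk x y) : Prop :=
  P.IsPath ∧ P.length = G.dist x y

/-- `P` is an induced path of `G`: a path that equals the subgraph of `G`
induced by its vertex set. -/
def IsInducedPath (G : SimpleGraph V) {x y : V} (P : G.Walk x y) : Prop :=
  P.IsPath ∧ ∀ a b : V, a ∈ P.support → b ∈ P.support → G.Adj a b → P.toSubgraph.Adj a b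

/-- A `uv`-trail of `G`: an induced `uv`-path of `G` that is not a shortest
`uv`-path of `G`. -/
def IsTrailPath (G : SimpleGraph V) (u v : V) (P : G.Walk u v) : Prop :=
  IsInducedPath G P ∧ ¬ IsShortestPath G P

/-- A shortest `uv`-trail of `G`: a `uv`-trail of minimum number of edges. -/
def IsShortestTrail (G : SimpleGraph V) (u v : V) (P : G.Walk u v) : Prop :=
  IsTrailPath G u v P ∧ ∀ Q : G.Walk u v, IsTrailPath G u v Q → P.length ≤ Q.length

/-- `G` is `uv`-straight: every vertex lies on a shortest `uv`-path of `G`. -/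
def Straight (G : SimpleGraph V) (u v : V) : Prop :=
  ∀ x : V, ∃ P : G.Walk u v, IsShortestPath G P ∧ x ∈ P.support

/-- Vertex sets `X` and `Y` are anticomplete in `G`: they are disjoint and there
is no edge of `G` between them. -/
def Anticomplete (G : SimpleGraph V) (X Y : Set V) : Prop :=
  ∀ x ∈ X, ∀ y ∈ Y, x ≠ y ∧ ¬ G.Adj x y

/-- `x` and `y` are connected in the subgraph of `G` induced by `A`. -/
def ConnIn (G : SimpleGraph V) (A : Set V) (x y : V) : Prop :=
  ∃ W : G.Walk x y, ∀ z ∈ W.support, z ∈ A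

/-- The closed neighborhood `N_G[A]` of a vertex set `A`. -/
def closedNbhd (G : SimpleGraph V) (A : Set V) : Set V :=
  {y | y ∈ A ∨ ∃ x ∈ A, G.Adj x y}

/-- `(s, t)` is the twist pair of the `uv`-path `P`: `P[u,s]` is the maximal
monotone prefix of `P` and `P[t,v]` is the maximal monotone suffix of `P`. -/
def IsTwistPair [DecidableEq V] (G : SimpleGraph V) (u v : V) (P : G.Walk u v)
    (s t : V) : Prop :=
  ∃ (hs : s ∈ P.support) (ht : t ∈ P.support),
    MonoWalk G u (P.takeUntil s hs) ∧ MonoWalk G u (P.dropUntil t ht) ∧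
    (∀ (s' : V) (hs' : s' ∈ P.support), MonoWalk G u (P.takeUntil s' hs') →
      (P.takeUntil s' hs').length ≤ (P.takeUntil s hs).length) ∧
    (∀ (t' : V) (ht' : t' ∈ P.support), MonoWalk G u (P.dropUntil t' ht') →
      (P.dropUntil t' ht').length ≤ (P.dropUntil t ht).length)

/-- `(W1, W2)` is a pair of wings for the quadruple `(a, b, c, d)` in `G`
(with respect to heights measured from `u`): `W1` is a monotone `c`-`a*`-path
containing `a`, `W2` is a monotone `b`-`d*`-path containing `d`,
`h(a*) + 1 = h(a) = h(b) ≤ h(c) = h(d) = h(d*) - 1`, `W1 - c` is anticomplete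
to `W2`, and `W1` is anticomplete to `W2 - b`. -/
def IsWingPair (G : SimpleGraph V) (u : V) (a b c d : V) {astar dstar : V}
    (W1 : G.Walk c astar) (W2 : G.Walk b dstar) : Prop :=
  W1.IsPath ∧ W2.IsPath ∧ MonoWalk G u W1 ∧ MonoWalk G u W2 ∧
  a ∈ W1.support ∧ d ∈ W2.support ∧
  G.dist u astar + 1 = G.dist u a ∧ G.dist u a = G.dist u b ∧
  G.dist u b ≤ G.dist u c ∧ G.dist u c = G.dist u d ∧
  G.dist u d + 1 = G.dist u dstar ∧
  Anticomplete G {x | x ∈ W1.support ∧ x ≠ c} {x | x ∈ W2.support} ∧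
  Anticomplete G {x | x ∈ W1.support} {x | x ∈ W2.support ∧ x ≠ b}

/-- The quadruple `(a, b, c, d)` is winged in `G`. -/
def Winged (G : SimpleGraph V) (u : V) (a b c d : V) : Prop :=
  ∃ (astar dstar : V) (W1 : G.Walk c astar) (W2 : G.Walk b dstar),
    IsWingPair G u a b c d W1 W2

/-- The quadruple `(a, b, c, d)` admits a pair of wings `(W1, W2)` in `G` with
`W1` anticomplete to `W2`. -/
def WingedAnti (G : SimpleGraph V) (u : V) (a b c d : V) : Prop :=
  ∃ (astar dstar : V) (W1 : G.Walk c astar) (W2 : G.Walk b dstar),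
    IsWingPair G u a b c d W1 W2 ∧
    Anticomplete G {x | x ∈ W1.support} {x | x ∈ W2.support}

/-- For a `uv`-trail `P` of a `uv`-straight graph `G` with twist pair `(s, t)`,
a monotone `uc`-path `S` of `G` with `h(c) = h(s)` is a sidetrack for `P` if
(S1) `G` contains a monotone `tv`-path `T` with `S - c` anticomplete to `T` and
`S` anticomplete to `T - t`, and (S2) `S` contains the vertex `a` of `P[u,s]`
with `h(a) = h(t)`. -/
def IsSidetrack [DecidableEq V] (G : SimpleGraph V) (u v : V) (P : G.Walk u v)
    (s t : V) {c : V} (S : G.Walk u c) : Prop :=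
  S.IsPath ∧ MonoWalk G u S ∧ G.dist u c = G.dist u s ∧
  (∃ (T : G.Walk t v), T.IsPath ∧ MonoWalk G u T ∧
    Anticomplete G {x | x ∈ S.support ∧ x ≠ c} {x | x ∈ T.support} ∧
    Anticomplete G {x | x ∈ S.support} {x | x ∈ T.support ∧ x ≠ t}) ∧
  (∀ (hs : s ∈ P.support) (a : V),
    a ∈ (P.takeUntil s hs).support → G.dist u a = G.dist u t → a ∈ S.support)

/-! Each of `S`, `Q`, `T` is an induced path: heights change by at most one along an edge, so
by the discrete intermediate value property a monotone walk changes height by exactly one per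
step in a fixed direction, hence is a shortest walk; and a shortest walk inside `A` has no
chords, since a chord would shortcut it inside `A`. Removing `N[S - c]` and `N[T - b]` from `A`
and the anticompleteness of `S` and `T` leave no common vertex or edge between two pieces other
than at the junctions `c` and `b`. The concatenation is not shortest because
`|S| + |Q| + |T| ≥ h(c) + 1 + d(b, v) > h(b) + d(b, v) ≥ d(u, v)`. -/

variable {G : SimpleGraph V}

namespace SimpleGraph.Walk

lemma exists_mem_support_dist_eq (u : V) {x y : V} (W : G.Walk x y) {k : ℕ}
    (hk : k ∈ Set.uIcc (G.dist u x) (G.dist u y)) : ∃ z ∈ W.support, G.dist u z = k := by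
  induction W with
  | nil => exact ⟨_, List.mem_singleton_self _, by simp_all⟩
  | @cons x x' y hadj W ih =>
    by_cases hkx : G.dist u x = k
    · exact ⟨x, List.mem_cons_self .., hkx⟩
    · have hstep := hadj.diff_dist_adj (u := u)
      rw [Set.mem_uIcc] at hk
      obtain ⟨z, hz, hzk⟩ := ih (by rw [Set.mem_uIcc]; omega)
      exact ⟨z, List.mem_cons_of_mem _ hz, hzk⟩

lemma isInducedPath_of_forall_length_le {A : Set V} {c b : V} {Q : G.Walk c b}
    (hQA : ∀ z ∈ Q.support, z ∈ A)
    (hmin : ∀ Q' : G.Walk c b, (∀ z ∈ Q'.support, z ∈ A) → Q.length ≤ Q'.length) :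
    IsInducedPath G Q := by
  classical
  have hpath : Q.IsPath := by
    rw [← bypass_eq_self_of_length_le_length_bypass Q
      (hmin _ fun z hz => hQA z (support_bypass_subset_support Q hz))]
    exact bypass_isPath Q
  refine ⟨hpath, fun x y hx hy hxy => ?_⟩
  obtain ⟨i, rfl, hi⟩ := mem_support_iff_exists_getVert.mp hx
  obtain ⟨j, rfl, hj⟩ := mem_support_iff_exists_getVert.mp hy
  clear hx hy
  wlog hij : i < j generalizing i j
  · have hji : j < i := by
      have : i ≠ j := fun h => hxy.ne (congrArg Q.getVert h)
      omega
    exact (this j hj i hi hxy.symm hji).symm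
  have hshort := hmin ((Q.take i).append (cons hxy (Q.drop j))) fun z hz => by
    rw [mem_support_append_iff, support_cons, List.mem_cons] at hz
    rcases hz with hz | rfl | hz
    · exact hQA z ((Q.isSubwalk_take i).support_subset hz)
    · exact hQA _ (Q.getVert_mem_support i)
    · exact hQA z ((Q.isSubwalk_drop j).support_subset hz)
  simp only [length_append, length_cons, take_length, drop_length] at hshort
  obtain rfl : j = i + 1 := by omega
  exact Q.toSubgraph_adj_getVert (by omega)

end SimpleGraph.Walk

open Walk

lemma IsInducedPath.append {u m w : V} {p : G.Walk u m} {q : G.Walk m w}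
    (hp : IsInducedPath G p) (hq : IsInducedPath G q)
    (hpq : ∀ x ∈ p.support, ∀ y ∈ q.support, (x = y ∨ G.Adj x y) → x = m ∨ y = m) :
    IsInducedPath G (p.append q) := by
  have hq' := hq.1.support_nodup
  rw [← cons_tail_support, List.nodup_cons] at hq'
  have hcross : ∀ x ∈ p.support, ∀ y ∈ q.support, G.Adj x y →
      s(x, y) ∈ (p.append q).edges := by
    intro x hx y hy hxy
    rw [edges_append, List.mem_append, ← adj_toSubgraph_iff_mem_edges,
      ← adj_toSubgraph_iff_mem_edges]
    rcases hpq x hx y hy (Or.inr hxy) with rfl | rfl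
    · exact Or.inr (hq.2 _ _ q.start_mem_support hy hxy)
    · exact Or.inl (hp.2 _ _ hx p.end_mem_support hxy)
  refine ⟨?_, fun x y hx hy hxy => ?_⟩
  · rw [isPath_def, support_append, List.nodup_append]
    refine ⟨hp.1.support_nodup, hq'.2, fun x hx y hy hxy => ?_⟩
    subst hxy
    rcases hpq x hx x (List.mem_of_mem_tail hy) (Or.inl rfl) with rfl | rfl <;> exact hq'.1 hy
  · rw [adj_toSubgraph_iff_mem_edges]
    rw [mem_support_append_iff] at hx hy
    rcases hx with hx | hx <;> rcases hy with hy | hy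
    · exact edges_append p q ▸ List.mem_append_left _
        (adj_toSubgraph_iff_mem_edges.mp (hp.2 _ _ hx hy hxy))
    · exact hcross x hx y hy hxy
    · exact Sym2.eq_swap ▸ hcross y hy x hx hxy.symm
    · exact edges_append p q ▸ List.mem_append_right _
        (adj_toSubgraph_iff_mem_edges.mp (hq.2 _ _ hx hy hxy))

lemma MonoWalk.dist_eq_add_length_or {u x y : V} {W : G.Walk x y} (hW : MonoWalk G u W) :
    G.dist u y = G.dist u x + W.length ∨ G.dist u x = G.dist u y + W.length := by
  induction W with
  | nil => simp
  | @cons x x' y hadj W ih =>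
    rw [MonoWalk, support_cons, List.map_cons, List.nodup_cons] at hW
    have hstep := hadj.diff_dist_adj (u := u)
    have hgap : G.dist u x ∉ Set.uIcc (G.dist u x') (G.dist u y) := fun hmem => by
      obtain ⟨z, hz, hzx⟩ := W.exists_mem_support_dist_eq u hmem
      exact hW.1 (List.mem_map.mpr ⟨z, hz, hzx⟩)
    rw [Set.mem_uIcc] at hgap
    rw [length_cons]
    rcases ih hW.2 with h | h <;> omega

lemma MonoWalk.length_eq_dist {u x y : V} {W : G.Walk x y} (hW : MonoWalk G u W) :
    W.length = G.dist x y := by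
  refine le_antisymm ?_ (dist_le W)
  have hxy := W.reachable.dist_triangle_right u
  have hyx := W.reachable.symm.dist_triangle_right u
  rw [dist_comm (u := y)] at hyx
  rcases hW.dist_eq_add_length_or with h | h <;> omega

lemma MonoWalk.isInducedPath {u x y : V} {W : G.Walk x y} (hW : MonoWalk G u W) :
    IsInducedPath G W :=
  isInducedPath_of_forall_length_le (A := Set.univ) (fun _ _ => trivial)
    fun W' _ => hW.length_eq_dist ▸ dist_le W'

lemma Anticomplete.symm {X Y : Set V} (h : Anticomplete G X Y) : Anticomplete G Y X :=
  fun y hy x hx => ⟨(h x hx y hy).1.symm, fun hyx => (h x hx y hy).2 hyx.symm⟩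

lemma Anticomplete.notMem_closedNbhd {X Y : Set V} (h : Anticomplete G X Y) {y : V}
    (hy : y ∈ Y) : y ∉ closedNbhd G X := by
  rintro (hyX | ⟨x, hx, hxy⟩)
  · exact (h y hyX y hy).1 rfl
  · exact (h x hx y hy).2 hxy

lemma mem_closedNbhd_of_eq_or_adj {X : Set V} {x y : V} (hx : x ∈ X) (h : x = y ∨ G.Adj x y) :
    y ∈ closedNbhd G X :=
  h.elim (fun hxy => Or.inl (hxy ▸ hx)) fun hxy => Or.inr ⟨x, hx, hxy⟩

theorem statement7_general (G : SimpleGraph V) (u v : V)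
    (b c : V) (hbc : b ≠ c) (hheight : G.dist u b ≤ G.dist u c)
    (S : G.Walk u c) (hSmono : MonoWalk G u S)
    (T : G.Walk b v) (hTmono : MonoWalk G u T)
    (hanti1 : Anticomplete G {x | x ∈ S.support ∧ x ≠ c} {x | x ∈ T.support})
    (hanti2 : Anticomplete G {x | x ∈ S.support} {x | x ∈ T.support ∧ x ≠ b})
    (A : Set V)
    (hA : A = {x | G.dist u b ≤ G.dist u x ∧ G.dist u x ≤ G.dist u c} \
      ((closedNbhd G {x | x ∈ S.support ∧ x ≠ c} ∪
        closedNbhd G {x | x ∈ T.support ∧ x ≠ b}) \ {c, b}))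
    (Q : G.Walk c b) (hQA : ∀ z ∈ Q.support, z ∈ A)
    (hQmin : ∀ Q' : G.Walk c b, (∀ z ∈ Q'.support, z ∈ A) →
      Q.length ≤ Q'.length) :
    IsTrailPath G u v (S.append (Q.append T)) := by
  have hQX : ∀ z ∈ Q.support, z ≠ c → z ∉ closedNbhd G {x | x ∈ S.support ∧ x ≠ c} := by
    intro z hz hzc hzX
    obtain rfl | hzb := eq_or_ne z b
    · exact hanti1.notMem_closedNbhd T.start_mem_support hzX
    · exact ((hA ▸ hQA z hz).2 ⟨Or.inl hzX, by simp [hzc, hzb]⟩)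
  have hQY : ∀ z ∈ Q.support, z ≠ b → z ∉ closedNbhd G {x | x ∈ T.support ∧ x ≠ b} := by
    intro z hz hzb hzY
    obtain rfl | hzc := eq_or_ne z c
    · exact hanti2.symm.notMem_closedNbhd S.end_mem_support hzY
    · exact ((hA ▸ hQA z hz).2 ⟨Or.inr hzY, by simp [hzc, hzb]⟩)
  have hQT : IsInducedPath G (Q.append T) :=
    (isInducedPath_of_forall_length_le hQA hQmin).append hTmono.isInducedPath
      fun x hx y hy hxy => by
        by_contra! hne
        exact hQY x hx hne.1 (mem_closedNbhd_of_eq_or_adj ⟨hy, hne.2⟩ (hxy.imp Eq.symm Adj.symm))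
  refine ⟨hSmono.isInducedPath.append hQT fun x hx y hy hxy => ?_, ?_⟩
  · by_contra! hne
    have hyX : y ∈ closedNbhd G {x | x ∈ S.support ∧ x ≠ c} :=
      mem_closedNbhd_of_eq_or_adj ⟨hx, hne.1⟩ hxy
    rcases (mem_support_append_iff Q T).mp hy with hy | hy
    · exact hQX y hy hne.2 hyX
    · exact hanti1.notMem_closedNbhd hy hyX
  · rintro ⟨-, hlen⟩
    have hS := dist_le S
    have hT := dist_le T
    have hQ : Q.length ≠ 0 := fun h => hbc (eq_of_length_eq_zero h).symm
    have htri := T.reachable.dist_triangle_right u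
    simp only [length_append] at hlen
    omega

/-- Let `b ≠ c` be vertices of a `uv`-straight graph `G` with
`h(b) ≤ h(c)`, let `S` be a monotone `uc`-path and `T` a monotone `bv`-path of
`G` with `S - c` anticomplete to `T` and `S` anticomplete to `T - b`, and let
`G_{c,b}` be the subgraph of `G` induced by
`{x : h(b) ≤ h(x) ≤ h(c)} \ ((N_G[S-c] ∪ N_G[T-b]) \ {c, b})`. If `Q` is a
shortest `cb`-path of `G_{c,b}`, then the concatenation of `S`, `Q`, and `T` is
a `uv`-trail of `G`. -/
theorem statement7 [Fintype V] [DecidableEq V] (G : SimpleGraph V) (u v : V)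
    (hstraight : Straight G u v)
    (b c : V) (hbc : b ≠ c) (hheight : G.dist u b ≤ G.dist u c)
    (S : G.Walk u c) (hSpath : S.IsPath) (hSmono : MonoWalk G u S)
    (T : G.Walk b v) (hTpath : T.IsPath) (hTmono : MonoWalk G u T)
    (hanti1 : Anticomplete G {x | x ∈ S.support ∧ x ≠ c} {x | x ∈ T.support})
    (hanti2 : Anticomplete G {x | x ∈ S.support} {x | x ∈ T.support ∧ x ≠ b})
    (A : Set V)
    (hA : A = {x | G.dist u b ≤ G.dist u x ∧ G.dist u x ≤ G.dist u c} \
      ((closedNbhd G {x | x ∈ S.support ∧ x ≠ c} ∪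
        closedNbhd G {x | x ∈ T.support ∧ x ≠ b}) \ {c, b}))
    (Q : G.Walk c b) (hQpath : Q.IsPath) (hQA : ∀ z ∈ Q.support, z ∈ A)
    (hQmin : ∀ Q' : G.Walk c b, (∀ z ∈ Q'.support, z ∈ A) →
      Q.length ≤ Q'.length) :
    IsTrailPath G u v (S.append (Q.append T)) :=
  statement7_general G u v b c hbc hheight S hSmono T hTmono hanti1 hanti2 A hA Q hQA hQmin
end

section
/- Let G be a graph with distinguished vertex u and heights h(x) = d_G(u,x), and let a,b,x,y,c,d be vertices with h(a) = h(b) ≤ h(x) = h(y) ≤ h(c) = h(d). If (a,b,x,y) admits a pair of wings (U1,U2) in G with U1 anticomplete to U2, and (x,y,c,d) admits a pair of wings (V1,V2) in G with V1 anticomplete to V2, then (a,b,c,d) admits a pair of wings (W1,W2) in G with W1 anticomplete to W2. -/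
open SimpleGraph

variable {V : Type*}

/-!
Glue the given wings at `x` and `y`: the new first wing runs along `V1` from `c` down to `x` and
then along `U1`, the new second wing along `U2` from `b` up to `y` and then along `V2`. Heights
change by at most one along an edge, so a monotone path is strictly ascending or strictly
descending. Hence, apart from `x` and `y` themselves, the two halves of each new wing lie strictly
on opposite sides of the common height `h(x) = h(y)`, which makes the glued walks monotone. Two
vertices of the new wings not already separated by one of the given anticomplete pairs lie
strictly on opposite sides of that height, so their heights differ by at least two and they are
neither equal nor adjacent.
-/

namespace List

theorem isChain_lt_or_gt_of_nodup_of_step_le_one : ∀ {l : List ℕ},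
    l.IsChain (fun m n => n ≤ m + 1 ∧ m ≤ n + 1) → l.Nodup →
    l.IsChain (· < ·) ∨ l.IsChain (· > ·)
  | [], _, _ => Or.inl isChain_nil
  | [_], _, _ => Or.inl (isChain_singleton _)
  | a :: b :: t, hstep, hnd => by
    rw [isChain_cons_cons] at hstep
    have ih := isChain_lt_or_gt_of_nodup_of_step_le_one hstep.2 hnd.of_cons
    have hab : a ≠ b := fun h => hnd.notMem (h ▸ mem_cons_self)
    rcases t with _ | ⟨e, t⟩
    · rcases lt_or_gt_of_ne hab with h | h
      · exact Or.inl (isChain_pair.mpr h)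
      · exact Or.inr (isChain_pair.mpr h)
    · have hae : a ≠ e := fun h => hnd.notMem (h ▸ mem_cons_of_mem _ mem_cons_self)
      have hbe := (isChain_cons_cons.mp hstep.2).1
      -- turning back at `b` would revisit the height `e`
      rcases ih with ih | ih
      · exact Or.inl (isChain_cons_cons.mpr ⟨by grind, ih⟩)
      · exact Or.inr (isChain_cons_cons.mpr ⟨by grind, ih⟩)

end List

namespace SimpleGraph

variable {G : SimpleGraph V}

theorem Adj.dist_le_dist_add_one {v w : V} (hadj : G.Adj v w) (u : V) :
    G.dist u w ≤ G.dist u v + 1 := by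
  rcases hadj.diff_dist_adj (u := u) with h | h | h <;> omega

theorem ne_and_not_adj_of_dist_add_two_le {u w z : V}
    (h : G.dist u z + 2 ≤ G.dist u w ∨ G.dist u w + 2 ≤ G.dist u z) :
    w ≠ z ∧ ¬ G.Adj w z := by
  refine ⟨by rintro rfl; omega, fun hadj => ?_⟩
  have := hadj.dist_le_dist_add_one u
  have := hadj.symm.dist_le_dist_add_one u
  omega

theorem Walk.dist_le_of_isChain_lt {u p q w : V} (W : G.Walk p q)
    (hW : (W.support.map (G.dist u)).IsChain (· < ·)) (hw : w ∈ W.support) :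
    G.dist u p ≤ G.dist u w ∧ G.dist u w ≤ G.dist u q := by
  induction W generalizing w with
  | nil => simp_all
  | cons hadj W ih =>
    rw [support_cons, List.map_cons, ← W.cons_tail_support, List.map_cons,
      List.isChain_cons_cons, ← List.map_cons, W.cons_tail_support] at hW
    obtain ⟨hstart, hW⟩ := hW
    rcases List.mem_cons.mp hw with rfl | hw
    · have := ih hW W.start_mem_support
      omega
    · have := ih hW hw
      omega

end SimpleGraph

section Wings

variable {G : SimpleGraph V} {u : V}

theorem Anticomplete.mono {X X' Y Y' : Set V} (h : Anticomplete G X Y) (hX : X' ⊆ X)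
    (hY : Y' ⊆ Y) : Anticomplete G X' Y' :=
  fun x hx y hy => h x (hX hx) y (hY hy)

namespace MonoWalk

variable {p q : V} {W : G.Walk p q}

theorem reverse (hW : MonoWalk G u W) : MonoWalk G u W.reverse := by
  rw [MonoWalk, Walk.support_reverse, List.map_reverse]
  exact List.nodup_reverse.mpr hW

theorem isPath (hW : MonoWalk G u W) : W.IsPath :=
  Walk.IsPath.mk' hW.of_map

theorem takeUntil [DecidableEq V] {m : V} (hW : MonoWalk G u W) (hm : m ∈ W.support) :
    MonoWalk G u (W.takeUntil m hm) :=
  hW.sublist ((W.support_takeUntil_prefix_support hm).sublist.map _)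

theorem eq_of_dist_eq (hW : MonoWalk G u W) {w z : V} (hw : w ∈ W.support)
    (hz : z ∈ W.support) (h : G.dist u w = G.dist u z) : w = z :=
  List.inj_on_of_nodup_map hW hw hz h

theorem isChain_lt_or_gt (hW : MonoWalk G u W) :
    (W.support.map (G.dist u)).IsChain (· < ·) ∨ (W.support.map (G.dist u)).IsChain (· > ·) :=
  List.isChain_lt_or_gt_of_nodup_of_step_le_one
    (List.isChain_map_of_isChain _
      (fun _ _ hadj => ⟨hadj.dist_le_dist_add_one u, hadj.symm.dist_le_dist_add_one u⟩)
      W.isChain_adj_support)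
    hW

theorem dist_le_of_mem (hW : MonoWalk G u W) (hpq : G.dist u p ≤ G.dist u q) {w : V}
    (hw : w ∈ W.support) : G.dist u p ≤ G.dist u w ∧ G.dist u w ≤ G.dist u q := by
  rcases hW.isChain_lt_or_gt with h | h
  · exact W.dist_le_of_isChain_lt h hw
  · have hrev : (W.reverse.support.map (G.dist u)).IsChain (· < ·) := by
      rwa [Walk.support_reverse, List.map_reverse, List.isChain_reverse]
    have := W.reverse.dist_le_of_isChain_lt hrev (by simpa using hw)
    -- a descending walk with `h p ≤ h q` is trivial
    omega

theorem dist_start_lt (hW : MonoWalk G u W) (hpq : G.dist u p ≤ G.dist u q) {w : V}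
    (hw : w ∈ W.support) (hwp : w ≠ p) : G.dist u p < G.dist u w :=
  lt_of_le_of_ne (hW.dist_le_of_mem hpq hw).1
    fun h => hwp (hW.eq_of_dist_eq hw W.start_mem_support h.symm)

theorem dist_lt_end (hW : MonoWalk G u W) (hpq : G.dist u p ≤ G.dist u q) {w : V}
    (hw : w ∈ W.support) (hwq : w ≠ q) : G.dist u w < G.dist u q :=
  lt_of_le_of_ne (hW.dist_le_of_mem hpq hw).2
    fun h => hwq (hW.eq_of_dist_eq hw W.end_mem_support h)

theorem dist_end_lt (hW : MonoWalk G u W) (hqp : G.dist u q ≤ G.dist u p) {w : V}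
    (hw : w ∈ W.support) (hwq : w ≠ q) : G.dist u q < G.dist u w :=
  hW.reverse.dist_start_lt hqp (by simpa using hw) hwq

theorem dist_lt_start (hW : MonoWalk G u W) (hqp : G.dist u q ≤ G.dist u p) {w : V}
    (hw : w ∈ W.support) (hwp : w ≠ p) : G.dist u w < G.dist u p :=
  hW.reverse.dist_lt_end hqp (by simpa using hw) hwp

theorem append_of_le {m : V} {U : G.Walk m q} {W : G.Walk p m} (hW : MonoWalk G u W)
    (hU : MonoWalk G u U) (hpm : G.dist u p ≤ G.dist u m) (hmq : G.dist u m ≤ G.dist u q) :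
    MonoWalk G u (W.append U) := by
  have hU' := hU
  rw [MonoWalk, ← U.cons_tail_support, List.map_cons, List.nodup_cons] at hU'
  rw [MonoWalk, Walk.support_append, List.map_append, List.nodup_append]
  refine ⟨hW, hU'.2, ?_⟩
  simp only [List.mem_map]
  rintro _ ⟨w, hw, rfl⟩ _ ⟨z, hz, rfl⟩ hwz
  have := (hW.dist_le_of_mem hpm hw).2
  have := (hU.dist_le_of_mem hmq (List.mem_of_mem_tail hz)).1
  exact hU'.1 (List.mem_map.mpr ⟨z, hz, by omega⟩)

theorem append_of_ge {m : V} {U : G.Walk m q} {W : G.Walk p m} (hW : MonoWalk G u W)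
    (hU : MonoWalk G u U) (hmp : G.dist u m ≤ G.dist u p) (hqm : G.dist u q ≤ G.dist u m) :
    MonoWalk G u (W.append U) := by
  have := hU.reverse.append_of_le hW.reverse hqm hmp
  rw [← Walk.reverse_append] at this
  simpa using this.reverse

end MonoWalk

theorem anticomplete_support_append {c x a' b y d' : V} {T1 : G.Walk c x} {U1 : G.Walk x a'}
    {T2 : G.Walk b y} {V2 : G.Walk y d'} (hxy : G.dist u x = G.dist u y)
    (hT1 : ∀ w ∈ T1.support, w ≠ x → G.dist u x < G.dist u w)
    (hU1 : ∀ w ∈ U1.support, w ≠ x → G.dist u w < G.dist u x)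
    (hT2 : ∀ z ∈ T2.support, z ≠ y → G.dist u z < G.dist u y)
    (hV2 : ∀ z ∈ V2.support, z ≠ y → G.dist u y < G.dist u z)
    (hUT : Anticomplete G {w | w ∈ U1.support} {z | z ∈ T2.support})
    (hTV : Anticomplete G {w | w ∈ T1.support} {z | z ∈ V2.support}) :
    Anticomplete G {w | w ∈ (T1.append U1).support} {z | z ∈ (T2.append V2).support} := by
  intro w hw z hz
  rcases (Walk.mem_support_append_iff _ _).mp hw with hw | hw <;>
    rcases (Walk.mem_support_append_iff _ _).mp hz with hz | hz
  · by_cases hwx : w = x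
    · subst hwx
      exact hUT w U1.start_mem_support z hz
    by_cases hzy : z = y
    · subst hzy
      exact hTV w hw z V2.start_mem_support
    have := hT1 w hw hwx
    have := hT2 z hz hzy
    exact ne_and_not_adj_of_dist_add_two_le (u := u) (Or.inl (by omega))
  · exact hTV w hw z hz
  · exact hUT w hw z hz
  · by_cases hwx : w = x
    · subst hwx
      exact hTV w T1.end_mem_support z hz
    by_cases hzy : z = y
    · subst hzy
      exact hUT w hw z T2.end_mem_support
    have := hU1 w hw hwx
    have := hV2 z hz hzy
    exact ne_and_not_adj_of_dist_add_two_le (u := u) (Or.inr (by omega))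

theorem wingedAnti_of_monoWalk {a b c d a' d' : V} {W1 : G.Walk c a'} {W2 : G.Walk b d'}
    (hW1 : MonoWalk G u W1) (hW2 : MonoWalk G u W2) (ha : a ∈ W1.support)
    (hd : d ∈ W2.support) (ha' : G.dist u a' + 1 = G.dist u a) (hab : G.dist u a = G.dist u b)
    (hbc : G.dist u b ≤ G.dist u c) (hcd : G.dist u c = G.dist u d)
    (hd' : G.dist u d + 1 = G.dist u d')
    (hanti : Anticomplete G {x | x ∈ W1.support} {x | x ∈ W2.support}) :
    WingedAnti G u a b c d :=
  ⟨a', d', W1, W2, ⟨hW1.isPath, hW2.isPath, hW1, hW2, ha, hd, ha', hab, hbc, hcd, hd',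
    hanti.mono (fun _ h => h.1) subset_rfl, hanti.mono subset_rfl fun _ h => h.1⟩, hanti⟩

end Wings

theorem statement14_general [DecidableEq V] (G : SimpleGraph V) (u : V)
    (a b x y c d : V)
    (habxy : WingedAnti G u a b x y) (hxycd : WingedAnti G u x y c d) :
    WingedAnti G u a b c d := by
  obtain ⟨a', _, U1, U2, ⟨-, -, hU1, hU2, haU1, hyU2, ha', hab, hbx, hxy, -, -, -⟩, hU⟩ := habxy
  obtain ⟨_, d', V1, V2, ⟨-, -, hV1, hV2, hxV1, hdV2, -, -, hyc, hcd, hd', -, -⟩, hV⟩ := hxycd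
  have hT1 := hV1.takeUntil hxV1
  have hT2 := hU2.takeUntil hyU2
  have hxc : G.dist u x ≤ G.dist u c := hxy ▸ hyc
  have ha'x : G.dist u a' ≤ G.dist u x := by omega
  have hby : G.dist u b ≤ G.dist u y := hxy ▸ hbx
  have hyd' : G.dist u y ≤ G.dist u d' := by omega
  refine wingedAnti_of_monoWalk (hT1.append_of_ge hU1 hxc ha'x) (hT2.append_of_le hV2 hby hyd')
    ((Walk.mem_support_append_iff _ _).mpr (Or.inr haU1))
    ((Walk.mem_support_append_iff _ _).mpr (Or.inr hdV2)) ha' hab (by omega) hcd hd' ?_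
  exact anticomplete_support_append hxy (fun w hw => hT1.dist_end_lt hxc hw)
    (fun w hw => hU1.dist_lt_start ha'x hw) (fun z hz => hT2.dist_lt_end hby hz)
    (fun z hz => hV2.dist_start_lt hyd' hz)
    (hU.mono subset_rfl fun _ hz => U2.support_takeUntil_subset_support hyU2 hz)
    (hV.mono (fun _ hw => V1.support_takeUntil_subset_support hxV1 hw) subset_rfl)

/-- Let `a, b, x, y, c, d` be vertices of `G` with
`h(a) = h(b) ≤ h(x) = h(y) ≤ h(c) = h(d)`. If `(a, b, x, y)` admits a pair of
wings in `G` whose two wings are anticomplete to each other, and `(x, y, c, d)`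
does as well, then `(a, b, c, d)` admits a pair of wings in `G` whose two wings
are anticomplete to each other. -/
theorem statement14 [Fintype V] [DecidableEq V] (G : SimpleGraph V) (u : V)
    (a b x y c d : V)
    (h1 : G.dist u a = G.dist u b) (h2 : G.dist u b ≤ G.dist u x)
    (h3 : G.dist u x = G.dist u y) (h4 : G.dist u y ≤ G.dist u c)
    (h5 : G.dist u c = G.dist u d)
    (habxy : WingedAnti G u a b x y) (hxycd : WingedAnti G u x y c d) :
    WingedAnti G u a b c d :=
  statement14_general G u a b x y c d habxy hxycd
end
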